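/- arXiv:2502.21052 — 6 statements merged into one kernel-verified Lean document; each statement's English description precedes it below -/
import Mathlib

section
/- For any real numbers α, β, θ, x₀, the function u : ℝ × ℝ → ℂ defined by u(x,t) = β · exp( i[ αx − (α² − β²)t + θ ] ) / cosh( β(x − 2αt) + x₀ ) satisfies the NLS equation i∂_t u + ∂_x²u + 2|u|²u = 0 at every (x,t) ∈ ℝ². -/
open Complex ComplexConjugate

noncomputable section

/-- Partial derivative in `x` of a function of `(x, t)`. -/
def ux (u : ℝ × ℝ → ℂ) (x t : ℝ) : ℂ := deriv (fun y => u (y, t)) x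

/-- Second partial derivative in `x`. -/
def uxx (u : ℝ × ℝ → ℂ) (x t : ℝ) : ℂ := deriv (fun y => ux u y t) x

/-- Partial derivative in `t`. -/
def ut (u : ℝ × ℝ → ℂ) (x t : ℝ) : ℂ := deriv (fun s => u (x, s)) t

/-- The one-soliton solution of the NLS equation obtained from a one-step
Darboux transformation with spectral parameter `λ₁ = α + iβ` and zero seed. -/
def nlsSoliton (α β θ x₀ : ℝ) : ℝ × ℝ → ℂ := fun p =>
  (β : ℂ) * Complex.exp (I * ((α * p.1 - (α ^ 2 - β ^ 2) * p.2 + θ : ℝ) : ℂ))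
    / ((Real.cosh (β * (p.1 - 2 * α * p.2) + x₀) : ℝ) : ℂ)

/-! ### Auxiliary definitions and derivative computations -/

/-- The oscillatory (phase) factor of the soliton. -/
def Ephase (α β θ : ℝ) (x t : ℝ) : ℂ :=
  Complex.exp (I * ((α * x - (α ^ 2 - β ^ 2) * t + θ : ℝ) : ℂ))

/-- The `cosh` denominator of the soliton, as a complex number. -/
def Cden (α β x₀ : ℝ) (x t : ℝ) : ℂ :=
  ((Real.cosh (β * (x - 2 * α * t) + x₀) : ℝ) : ℂ)

/-- The corresponding `sinh`, as a complex number. -/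
def Sden (α β x₀ : ℝ) (x t : ℝ) : ℂ :=
  ((Real.sinh (β * (x - 2 * α * t) + x₀) : ℝ) : ℂ)

lemma Cden_ne_zero (α β x₀ x t : ℝ) : Cden α β x₀ x t ≠ 0 := by
  unfold Cden; exact_mod_cast Complex.ofReal_ne_zero.mpr (Real.cosh_pos _).ne'

lemma hE_x (α β θ : ℝ) (x t : ℝ) :
    HasDerivAt (fun y => Ephase α β θ y t) (I * α * Ephase α β θ x t) x := by
  have h1 : HasDerivAt (fun y : ℝ => α * y - (α ^ 2 - β ^ 2) * t + θ) α x := by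
    simpa using (((hasDerivAt_id x).const_mul α).sub_const ((α ^ 2 - β ^ 2) * t)).add_const θ
  have h3 := (h1.ofReal_comp.const_mul I).cexp
  refine h3.congr_deriv ?_
  unfold Ephase; ring

lemma hE_t (α β θ : ℝ) (x t : ℝ) :
    HasDerivAt (fun s => Ephase α β θ x s) (-I * (α ^ 2 - β ^ 2) * Ephase α β θ x t) t := by
  have h1 : HasDerivAt (fun s : ℝ => α * x - (α ^ 2 - β ^ 2) * s + θ) (β ^ 2 - α ^ 2) t := by
    have h0 := ((hasDerivAt_const t (α * x)).sub
      ((hasDerivAt_id t).const_mul (α ^ 2 - β ^ 2))).add_const θ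
    refine h0.congr_deriv ?_
    ring
  have h3 := (h1.ofReal_comp.const_mul I).cexp
  refine h3.congr_deriv ?_
  unfold Ephase; push_cast; ring

lemma hC_x (α β x₀ : ℝ) (x t : ℝ) :
    HasDerivAt (fun y => Cden α β x₀ y t) (β * Sden α β x₀ x t) x := by
  have h1 : HasDerivAt (fun y : ℝ => β * (y - 2 * α * t) + x₀) β x := by
    simpa using (((hasDerivAt_id x).sub_const (2 * α * t)).const_mul β).add_const x₀
  have h3 := h1.cosh.ofReal_comp
  refine h3.congr_deriv ?_
  unfold Sden; push_cast; ring

lemma hC_t (α β x₀ : ℝ) (x t : ℝ) :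
    HasDerivAt (fun s => Cden α β x₀ x s) (-(2 * α * β) * Sden α β x₀ x t) t := by
  have h1 : HasDerivAt (fun s : ℝ => β * (x - 2 * α * s) + x₀) (-(2 * α * β)) t := by
    have := (((hasDerivAt_const t x).sub
      ((hasDerivAt_id t).const_mul (2 * α))).const_mul β).add_const x₀
    refine this.congr_deriv ?_
    ring
  have h3 := h1.cosh.ofReal_comp
  refine h3.congr_deriv ?_
  unfold Sden; push_cast; ring

lemma hS_x (α β x₀ : ℝ) (x t : ℝ) :
    HasDerivAt (fun y => Sden α β x₀ y t) (β * Cden α β x₀ x t) x := by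
  have h1 : HasDerivAt (fun y : ℝ => β * (y - 2 * α * t) + x₀) β x := by
    simpa using (((hasDerivAt_id x).sub_const (2 * α * t)).const_mul β).add_const x₀
  have h3 := h1.sinh.ofReal_comp
  refine h3.congr_deriv ?_
  unfold Cden; push_cast; ring

/-- The `x`-derivative of the soliton. -/
def UxF (α β θ x₀ : ℝ) (x t : ℝ) : ℂ :=
  ((β : ℂ) * (I * α) * (Ephase α β θ x t * Cden α β x₀ x t)
    - (β : ℂ) ^ 2 * (Ephase α β θ x t * Sden α β x₀ x t)) / (Cden α β x₀ x t) ^ 2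

/-- The second `x`-derivative of the soliton. -/
def XXF (α β θ x₀ : ℝ) (x t : ℝ) : ℂ :=
  ((β : ℂ) * (I * α) ^ 2 * Ephase α β θ x t * (Cden α β x₀ x t) ^ 2
    - 2 * I * α * β ^ 2 * Ephase α β θ x t * Sden α β x₀ x t * Cden α β x₀ x t
    + (β : ℂ) ^ 3 * Ephase α β θ x t * (2 * (Sden α β x₀ x t) ^ 2 - (Cden α β x₀ x t) ^ 2))
    / (Cden α β x₀ x t) ^ 3

/-- The `t`-derivative of the soliton. -/
def UtF (α β θ x₀ : ℝ) (x t : ℝ) : ℂ :=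
  (-(I * ((α : ℂ) ^ 2 - (β : ℂ) ^ 2)) * β * Ephase α β θ x t * Cden α β x₀ x t
    + 2 * α * β ^ 2 * (Ephase α β θ x t * Sden α β x₀ x t)) / (Cden α β x₀ x t) ^ 2

lemma hU_x (α β θ x₀ : ℝ) (x t : ℝ) :
    HasDerivAt (fun y => nlsSoliton α β θ x₀ (y, t)) (UxF α β θ x₀ x t) x := by
  have h := ((hE_x α β θ x t).const_mul (β : ℂ)).div (hC_x α β x₀ x t) (Cden_ne_zero α β x₀ x t)
  refine h.congr_deriv ?_
  unfold UxF; ring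

lemma hU_t (α β θ x₀ : ℝ) (x t : ℝ) :
    HasDerivAt (fun s => nlsSoliton α β θ x₀ (x, s)) (UtF α β θ x₀ x t) t := by
  have h := ((hE_t α β θ x t).const_mul (β : ℂ)).div (hC_t α β x₀ x t) (Cden_ne_zero α β x₀ x t)
  refine h.congr_deriv ?_
  unfold UtF; ring

lemma hUx_x (α β θ x₀ : ℝ) (x t : ℝ) :
    HasDerivAt (fun y => UxF α β θ x₀ y t) (XXF α β θ x₀ x t) x := by
  have hC0 := Cden_ne_zero α β x₀ x t
  have hN := (((hE_x α β θ x t).mul (hC_x α β x₀ x t)).const_mul ((β : ℂ) * (I * α))).sub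
    (((hE_x α β θ x t).mul (hS_x α β x₀ x t)).const_mul ((β : ℂ) ^ 2))
  have hD : HasDerivAt (fun y => (Cden α β x₀ y t) ^ 2)
      (2 * Cden α β x₀ x t * (β * Sden α β x₀ x t)) x := by
    simp only [pow_two]
    have h2 := (hC_x α β x₀ x t).mul (hC_x α β x₀ x t)
    refine h2.congr_deriv ?_
    ring
  have h := hN.div hD (pow_ne_zero 2 hC0)
  refine h.congr_deriv ?_
  unfold XXF
  simp only [Pi.sub_apply, Pi.mul_apply]
  field_simp
  ring

lemma norm_sq_eq (α β θ x₀ : ℝ) (x t : ℝ) :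
    ((‖nlsSoliton α β θ x₀ (x, t)‖ : ℝ) : ℂ) ^ 2
      = (β : ℂ) ^ 2 / (Cden α β x₀ x t) ^ 2 := by
  have hcpos := Real.cosh_pos (β * (x - 2 * α * t) + x₀)
  have h1 : ‖nlsSoliton α β θ x₀ (x, t)‖ = |β| / Real.cosh (β * (x - 2 * α * t) + x₀) := by
    simp [nlsSoliton, map_div₀, map_mul,
      Complex.norm_exp, abs_of_pos hcpos, Complex.mul_re, Complex.ofReal_re, Complex.ofReal_im,
      ← Complex.ofReal_pow, ← Complex.ofReal_cosh]
  rw [h1]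
  unfold Cden
  push_cast
  rw [div_pow]
  congr 1
  norm_cast
  exact _root_.sq_abs β

/-- The one-soliton function satisfies the NLS equation `i uₜ + uₓₓ + 2|u|²u = 0`
at every point of `ℝ²`. -/
theorem nlsSoliton_solves_nls (α β θ x₀ : ℝ) :
    ∀ x t : ℝ,
      I * ut (nlsSoliton α β θ x₀) x t + uxx (nlsSoliton α β θ x₀) x t
        + 2 * (‖nlsSoliton α β θ x₀ (x, t)‖ : ℂ) ^ 2 * nlsSoliton α β θ x₀ (x, t) = 0 := by
  intro x t
  have hC0 := Cden_ne_zero α β x₀ x t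
  have hE0 : Ephase α β θ x t ≠ 0 := Complex.exp_ne_zero _
  have hcs : (Cden α β x₀ x t) ^ 2 - (Sden α β x₀ x t) ^ 2 = 1 := by
    unfold Cden Sden
    push_cast
    exact Complex.cosh_sq_sub_sinh_sq _
  have h1 : ut (nlsSoliton α β θ x₀) x t = UtF α β θ x₀ x t :=
    (hU_t α β θ x₀ x t).deriv
  have h2 : (fun y => ux (nlsSoliton α β θ x₀) y t)
      = fun y => UxF α β θ x₀ y t := funext fun y => (hU_x α β θ x₀ y t).deriv
  have h3 : uxx (nlsSoliton α β θ x₀) x t = XXF α β θ x₀ x t := by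
    rw [uxx, h2]
    exact (hUx_x α β θ x₀ x t).deriv
  have h4 : nlsSoliton α β θ x₀ (x, t)
      = (β : ℂ) * Ephase α β θ x t / Cden α β x₀ x t := rfl
  rw [h1, h3, norm_sq_eq, h4]
  unfold UtF XXF
  have hI : (I : ℂ) ^ 2 = -1 := Complex.I_sq
  field_simp
  linear_combination (β : ℂ) ^ 3 * Ephase α β θ x t * (Cden α β x₀ x t) ^ 2 * hI
    - 2 * (β : ℂ) ^ 3 * Ephase α β θ x t * hcs
end
end

section
/- For any real numbers α, β, θ, x₀, the function u : ℝ × ℝ → ℂ defined by u(x,t) = β · exp( i[ α(x − (α² − 3β²)t) + θ ] ) / cosh( β(x − (3α² − β²)t) + x₀ ) satisfies the complex mKdV equation ∂_t u = ∂_x³u + 6|u|²∂_x u at every (x,t) ∈ ℝ². -/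
open Complex ComplexConjugate

noncomputable section

/-- Third partial derivative in `x`. -/
def uxxx (u : ℝ × ℝ → ℂ) (x t : ℝ) : ℂ := deriv (fun y => uxx u y t) x

/-- The one-soliton solution of the complex mKdV equation obtained from a one-step
Darboux transformation with spectral parameter `λ₁ = α + iβ` and zero seed. -/
def mkdvSoliton (α β θ x₀ : ℝ) : ℝ × ℝ → ℂ := fun p =>
  (β : ℂ) * Complex.exp (I * ((α * (p.1 - (α ^ 2 - 3 * β ^ 2) * p.2) + θ : ℝ) : ℂ))
    / ((Real.cosh (β * (p.1 - (3 * α ^ 2 - β ^ 2) * p.2) + x₀) : ℝ) : ℂ)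


namespace MkdvAux

def F (β a b c d : ℝ) (y : ℝ) : ℂ :=
  (β : ℂ) * Complex.exp (I * ((a * y + b : ℝ) : ℂ)) / ((Real.cosh (c * y + d) : ℝ) : ℂ)

def T (c d : ℝ) (y : ℝ) : ℂ := ((Real.tanh (c * y + d) : ℝ) : ℂ)

lemma cosh_ne (r : ℝ) : ((Real.cosh r : ℝ) : ℂ) ≠ 0 := by
  exact_mod_cast (Real.cosh_pos r).ne'

lemma hasDerivAt_arg (a b y : ℝ) : HasDerivAt (fun y : ℝ => a * y + b) a y := by
  simpa using ((hasDerivAt_id y).const_mul a).add_const b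

lemma hasDerivAt_tanh_aff (c d y : ℝ) :
    HasDerivAt (T c d) ((c : ℂ) * (1 - T c d y ^ 2)) y := by
  have hC : Real.cosh (c * y + d) ≠ 0 := (Real.cosh_pos _).ne'
  have hs : HasDerivAt (fun y : ℝ => Real.sinh (c * y + d)) (Real.cosh (c * y + d) * c) y :=
    (Real.hasDerivAt_sinh _).comp y (hasDerivAt_arg c d y)
  have hc : HasDerivAt (fun y : ℝ => Real.cosh (c * y + d)) (Real.sinh (c * y + d) * c) y :=
    (Real.hasDerivAt_cosh _).comp y (hasDerivAt_arg c d y)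
  have h1 : HasDerivAt (fun y : ℝ => Real.tanh (c * y + d))
      (c * (1 - Real.tanh (c * y + d) ^ 2)) y := by
    have := hs.div hc hC
    have heq : (fun y : ℝ => Real.tanh (c * y + d))
        = fun y : ℝ => Real.sinh (c * y + d) / Real.cosh (c * y + d) := by
      funext z; rw [Real.tanh_eq_sinh_div_cosh]
    rw [heq]
    refine HasDerivAt.congr_deriv this ?_
    symm
    rw [Real.tanh_eq_sinh_div_cosh]
    have hid := Real.cosh_sq_sub_sinh_sq (c*y+d)
    field_simp
  have := h1.ofReal_comp
  unfold T
  convert this using 1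
  push_cast
  ring

lemma F_hasDerivAt (β a b c d y : ℝ) :
    HasDerivAt (F β a b c d)
      ((I * a - c * T c d y) * F β a b c d y) y := by
  have harg : HasDerivAt (fun y : ℝ => ((a * y + b : ℝ) : ℂ)) (a : ℂ) y :=
    (hasDerivAt_arg a b y).ofReal_comp
  have hexp : HasDerivAt (fun y : ℝ => Complex.exp (I * ((a * y + b : ℝ) : ℂ)))
      (I * a * Complex.exp (I * ((a * y + b : ℝ) : ℂ))) y := by
    have := (harg.const_mul I).cexp
    simpa [mul_comm] using this
  have hnum := hexp.const_mul (β : ℂ)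
  have hcosh : HasDerivAt (fun y : ℝ => ((Real.cosh (c * y + d) : ℝ) : ℂ))
      (((Real.sinh (c * y + d) * c : ℝ) : ℂ)) y :=
    ((Real.hasDerivAt_cosh _).comp y (hasDerivAt_arg c d y)).ofReal_comp
  have h := hnum.div hcosh (cosh_ne _)
  refine HasDerivAt.congr_deriv h ?_
  symm
  have hC : ((Real.cosh (c * y + d) : ℝ) : ℂ) ≠ 0 := cosh_ne _
  unfold F T
  rw [Real.tanh_eq_sinh_div_cosh]
  have hC2 : Complex.cosh ((c:ℂ)*(y:ℂ)+(d:ℂ)) ≠ 0 := by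
    rw [show ((c:ℂ)*(y:ℂ)+(d:ℂ)) = ((c*y+d : ℝ):ℂ) by push_cast; ring, ← Complex.ofReal_cosh]
    exact cosh_ne _
  simp only [Complex.ofReal_mul, Complex.ofReal_div]
  field_simp [hC2]

/-- first x-derivative coefficient function -/
lemma G1_hasDerivAt (β a b c d x : ℝ) :
    HasDerivAt (fun y => (I * a - c * T c d y) * F β a b c d y)
      ((-((c:ℂ) * ((c:ℂ) * (1 - T c d x ^ 2)))) * F β a b c d x
        + (I * a - c * T c d x) * ((I * a - c * T c d x) * F β a b c d x)) x := by
  have hw : HasDerivAt (fun y => I * (a:ℂ) - (c:ℂ) * T c d y)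
      (-((c:ℂ) * ((c:ℂ) * (1 - T c d x ^ 2)))) x :=
    (((hasDerivAt_tanh_aff c d x).const_mul (c:ℂ))).const_sub (I * a)
  exact hw.mul (F_hasDerivAt β a b c d x)

lemma G2_hasDerivAt (β a b c d x : ℝ) :
    HasDerivAt (fun y => (-((c:ℂ) * ((c:ℂ) * (1 - T c d y ^ 2)))) * F β a b c d y
        + (I * a - c * T c d y) * ((I * a - c * T c d y) * F β a b c d y))
      ((-((c:ℂ) * ((c:ℂ) * (-(2 * T c d x * ((c:ℂ) * (1 - T c d x ^ 2))))))) * F β a b c d x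
        + (-((c:ℂ) * ((c:ℂ) * (1 - T c d x ^ 2)))) * ((I * a - c * T c d x) * F β a b c d x)
        + ((-((c:ℂ) * ((c:ℂ) * (1 - T c d x ^ 2)))) * ((I * a - c * T c d x) * F β a b c d x)
          + (I * a - c * T c d x) * ((-((c:ℂ) * ((c:ℂ) * (1 - T c d x ^ 2)))) * F β a b c d x
            + (I * a - c * T c d x) * ((I * a - c * T c d x) * F β a b c d x)))) x := by
  have hT := hasDerivAt_tanh_aff c d x
  have hF := F_hasDerivAt β a b c d x
  have hT2 : HasDerivAt (fun y => T c d y ^ 2) (2 * T c d x * ((c:ℂ) * (1 - T c d x ^ 2))) x := by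
    have := hT.mul hT
    have heq : (fun y => T c d y ^ 2) = fun y => T c d y * T c d y := by
      funext z; ring
    rw [heq]
    refine HasDerivAt.congr_deriv this ?_
    ring
  have hA : HasDerivAt (fun y => -((c:ℂ) * ((c:ℂ) * (1 - T c d y ^ 2))))
      (-((c:ℂ) * ((c:ℂ) * (-(2 * T c d x * ((c:ℂ) * (1 - T c d x ^ 2))))))) x :=
    (((hT2.const_sub 1).const_mul (c:ℂ)).const_mul (c:ℂ)).neg
  have hw : HasDerivAt (fun y => I * (a:ℂ) - (c:ℂ) * T c d y)
      (-((c:ℂ) * ((c:ℂ) * (1 - T c d x ^ 2)))) x :=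
    ((hT.const_mul (c:ℂ))).const_sub (I * a)
  have h1 := hA.mul hF
  have h2 := hw.mul (hw.mul hF)
  exact h1.add h2

end MkdvAux


/-- The one-soliton function satisfies the complex mKdV equation
`uₜ = uₓₓₓ + 6|u|²uₓ` at every point of `ℝ²`. -/
theorem mkdvSoliton_solves_mkdv (α β θ x₀ : ℝ) :
    ∀ x t : ℝ,
      ut (mkdvSoliton α β θ x₀) x t
        = uxxx (mkdvSoliton α β θ x₀) x t
          + 6 * (‖mkdvSoliton α β θ x₀ (x, t)‖ : ℂ) ^ 2 * ux (mkdvSoliton α β θ x₀) x t := by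
  intro x t
  set b : ℝ := θ - α*(α^2-3*β^2)*t with hb
  set d : ℝ := x₀ - β*(3*α^2-β^2)*t with hd
  have hxt : (fun y => mkdvSoliton α β θ x₀ (y, t)) = MkdvAux.F β α b β d := by
    funext y
    show (β:ℂ) * Complex.exp (I * ((α * (y - (α ^ 2 - 3 * β ^ 2) * t) + θ : ℝ) : ℂ))
        / ((Real.cosh (β * (y - (3 * α ^ 2 - β ^ 2) * t) + x₀) : ℝ) : ℂ) = MkdvAux.F β α b β d y
    unfold MkdvAux.F
    rw [show α * (y - (α ^ 2 - 3 * β ^ 2) * t) + θ = α*y + b from by rw [hb]; ring,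
        show β * (y - (3 * α ^ 2 - β ^ 2) * t) + x₀ = β*y + d from by rw [hd]; ring]
  have hts : (fun s => mkdvSoliton α β θ x₀ (x, s))
      = MkdvAux.F β (-(α*(α^2-3*β^2))) (α*x+θ) (-(β*(3*α^2-β^2))) (β*x+x₀) := by
    funext s
    show (β:ℂ) * Complex.exp (I * ((α * (x - (α ^ 2 - 3 * β ^ 2) * s) + θ : ℝ) : ℂ))
        / ((Real.cosh (β * (x - (3 * α ^ 2 - β ^ 2) * s) + x₀) : ℝ) : ℂ)
        = MkdvAux.F β (-(α*(α^2-3*β^2))) (α*x+θ) (-(β*(3*α^2-β^2))) (β*x+x₀) s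
    unfold MkdvAux.F
    rw [show α * (x - (α ^ 2 - 3 * β ^ 2) * s) + θ = (-(α*(α^2-3*β^2)))*s + (α*x+θ) from by ring,
        show β * (x - (3 * α ^ 2 - β ^ 2) * s) + x₀ = (-(β*(3*α^2-β^2)))*s + (β*x+x₀) from by ring]
  set M : ℂ := MkdvAux.F β α b β d x with hM
  set Tt : ℂ := MkdvAux.T β d x with hTt
  -- value of the soliton at (x,t)
  have hMu : mkdvSoliton α β θ x₀ (x, t) = M := by
    have := congrFun hxt x
    simpa using this
  -- t-derivative
  have hT_eq : MkdvAux.T (-(β*(3*α^2-β^2))) (β*x+x₀) t = Tt := by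
    rw [hTt]
    unfold MkdvAux.T
    rw [show (-(β*(3*α^2-β^2)))*t + (β*x+x₀) = β*x + d from by rw [hd]; ring]
  have hM_eq : MkdvAux.F β (-(α*(α^2-3*β^2))) (α*x+θ) (-(β*(3*α^2-β^2))) (β*x+x₀) t = M := by
    rw [hM]
    unfold MkdvAux.F
    rw [show (-(α*(α^2-3*β^2)))*t + (α*x+θ) = α*x + b from by rw [hb]; ring,
        show (-(β*(3*α^2-β^2)))*t + (β*x+x₀) = β*x + d from by rw [hd]; ring]
  have h_ut : ut (mkdvSoliton α β θ x₀) x t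
      = (I * ((-(α*(α^2-3*β^2)) : ℝ) : ℂ) - ((-(β*(3*α^2-β^2)) : ℝ) : ℂ) * Tt) * M := by
    unfold ut
    rw [hts, ← hT_eq, ← hM_eq]
    exact (MkdvAux.F_hasDerivAt β (-(α*(α^2-3*β^2))) (α*x+θ) (-(β*(3*α^2-β^2))) (β*x+x₀) t).deriv
  -- x-derivatives
  have h_ux_fun : (fun y => ux (mkdvSoliton α β θ x₀) y t)
      = fun y => (I * (α:ℂ) - (β:ℂ) * MkdvAux.T β d y) * MkdvAux.F β α b β d y := by
    funext y
    unfold ux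
    rw [hxt]
    exact (MkdvAux.F_hasDerivAt β α b β d y).deriv
  have h_ux : ux (mkdvSoliton α β θ x₀) x t = (I * (α:ℂ) - (β:ℂ) * Tt) * M := by
    rw [congrFun h_ux_fun x, hM, hTt]
  have h_uxx_fun : (fun y => uxx (mkdvSoliton α β θ x₀) y t)
      = fun y => (-((β:ℂ) * ((β:ℂ) * (1 - MkdvAux.T β d y ^ 2)))) * MkdvAux.F β α b β d y
        + (I * (α:ℂ) - (β:ℂ) * MkdvAux.T β d y)
          * ((I * (α:ℂ) - (β:ℂ) * MkdvAux.T β d y) * MkdvAux.F β α b β d y) := by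
    funext y
    unfold uxx
    rw [h_ux_fun]
    exact (MkdvAux.G1_hasDerivAt β α b β d y).deriv
  have h_uxxx : uxxx (mkdvSoliton α β θ x₀) x t
      = (-((β:ℂ) * ((β:ℂ) * (-(2 * Tt * ((β:ℂ) * (1 - Tt ^ 2))))))) * M
        + (-((β:ℂ) * ((β:ℂ) * (1 - Tt ^ 2)))) * ((I * (α:ℂ) - (β:ℂ) * Tt) * M)
        + ((-((β:ℂ) * ((β:ℂ) * (1 - Tt ^ 2)))) * ((I * (α:ℂ) - (β:ℂ) * Tt) * M)
          + (I * (α:ℂ) - (β:ℂ) * Tt) * ((-((β:ℂ) * ((β:ℂ) * (1 - Tt ^ 2)))) * M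
            + (I * (α:ℂ) - (β:ℂ) * Tt) * ((I * (α:ℂ) - (β:ℂ) * Tt) * M))) := by
    unfold uxxx
    rw [h_uxx_fun, hM, hTt]
    exact (MkdvAux.G2_hasDerivAt β α b β d x).deriv
  -- norm
  have hnr : (|β| / Real.cosh (β*x+d))^2 = β^2 * (1 - Real.tanh (β*x+d)^2) := by
    have hC : Real.cosh (β*x+d) ≠ 0 := (Real.cosh_pos _).ne'
    rw [div_pow, _root_.sq_abs, Real.tanh_eq_sinh_div_cosh, div_pow]
    field_simp
    linear_combination (-β^2) * Real.cosh_sq_sub_sinh_sq (β*x+d)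
  have hnorm1 : ‖mkdvSoliton α β θ x₀ (x, t)‖ = |β| / Real.cosh (β*x+d) := by
    rw [hMu, hM]
    unfold MkdvAux.F
    rw [norm_div, norm_mul]
    simp [Complex.norm_real, Real.norm_eq_abs, Complex.norm_exp,
      abs_of_pos (Real.cosh_pos (β*x+d))]
    rw [show ((β:ℂ)*x+d) = ((β*x+d : ℝ):ℂ) from by push_cast; ring, ← Complex.ofReal_cosh,
      Complex.norm_real, Real.norm_eq_abs, abs_of_pos (Real.cosh_pos _)]
  have hnorm : ((‖mkdvSoliton α β θ x₀ (x, t)‖ : ℝ) : ℂ) ^ 2 = (β:ℂ)^2 * (1 - Tt^2) := by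
    rw [hnorm1, ← Complex.ofReal_pow, hnr, hTt]
    unfold MkdvAux.T
    push_cast
    ring
  rw [h_ut, h_uxxx, hnorm, h_ux]
  push_cast
  linear_combination ((3*(α:ℂ)^2*(β:ℂ)*Tt - I*(α:ℂ)^3) * M) * Complex.I_sq

end
end

section
/- Let A : ℂ → M₂(ℂ) satisfy A(−λ) = A(λ) for all λ ∈ ℂ. Let V : ℝ × ℂ → M₂(ℂ), let T : ℝ × ℂ → M₂(ℂ) be differentiable in t with T(t,λ) invertible for all (t,λ) and ∂_t T(t,λ) = A(λ)·T(t,λ) − T(t,λ)·V(t,λ), and let K : ℝ × ℂ → M₂(ℂ) be differentiable in t with ∂_t K(t,λ) = V(t,λ)·K(t,λ) − K(t,λ)·V(t,−λ). Then for every λ ∈ ℂ, the function t ↦ trace( T(t,λ)·K(t,λ)·T(t,−λ)⁻¹ ) is constant on ℝ. -/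
open Matrix

noncomputable section

private lemma entry_mul_deriv {f g : ℝ → Matrix (Fin 2) (Fin 2) ℂ}
    {f' g' : Matrix (Fin 2) (Fin 2) ℂ} {t : ℝ}
    (hf : ∀ i j, HasDerivAt (fun s => f s i j) (f' i j) t)
    (hg : ∀ i j, HasDerivAt (fun s => g s i j) (g' i j) t) :
    ∀ i j, HasDerivAt (fun s => (f s * g s) i j) ((f' * g t + f t * g') i j) t := by
  intro i j
  have h := HasDerivAt.fun_sum (fun k (_ : k ∈ Finset.univ) => ((hf i k).mul (hg k j)))
  simpa [Matrix.mul_apply, Matrix.add_apply, Finset.sum_add_distrib] using h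

private lemma entry_inv_deriv {S : ℝ → Matrix (Fin 2) (Fin 2) ℂ}
    {S' : Matrix (Fin 2) (Fin 2) ℂ} {t : ℝ}
    (hinv : ∀ s, IsUnit (S s))
    (hS : ∀ i j, HasDerivAt (fun s => S s i j) (S' i j) t) :
    ∀ i j, HasDerivAt (fun s => (S s)⁻¹ i j)
      ((-((S t)⁻¹ * S' * (S t)⁻¹)) i j) t := by
  have hdet : ∀ s, (S s).det ≠ 0 := fun s =>
    ((Matrix.isUnit_iff_isUnit_det _).1 (hinv s)).ne_zero
  have hdetdiff : DifferentiableAt ℝ (fun s => (S s).det) t := by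
    have : (fun s => (S s).det)
        = fun s => S s 0 0 * S s 1 1 - S s 0 1 * S s 1 0 := by
      funext s; rw [Matrix.det_fin_two]
    rw [this]
    exact (((hS 0 0).differentiableAt.mul (hS 1 1).differentiableAt).sub
      ((hS 0 1).differentiableAt.mul (hS 1 0).differentiableAt))
  have hadjdiff : ∀ i j, DifferentiableAt ℝ (fun s => (S s).adjugate i j) t := by
    intro i j
    fin_cases i <;> fin_cases j <;>
      simp only [Matrix.adjugate_fin_two, Matrix.cons_val_zero, Matrix.cons_val_one,
        Matrix.head_cons, Matrix.head_fin_const, Fin.isValue] <;>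
      first
        | exact (hS _ _).differentiableAt
        | exact (hS _ _).differentiableAt.neg
  have hentry : ∀ s i j, (S s)⁻¹ i j = ((S s).det)⁻¹ * (S s).adjugate i j := by
    intro s i j
    rw [Matrix.inv_def]
    simp [Ring.inverse_eq_inv']
  have hNdiff : ∀ i j, DifferentiableAt ℝ (fun s => (S s)⁻¹ i j) t := by
    intro i j
    have : (fun s => (S s)⁻¹ i j) = fun s => ((S s).det)⁻¹ * (S s).adjugate i j := by
      funext s; exact hentry s i j
    rw [this]
    exact (hdetdiff.inv (hdet t)).mul (hadjdiff i j)
  set D : Matrix (Fin 2) (Fin 2) ℂ :=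
    Matrix.of (fun i j => deriv (fun s => (S s)⁻¹ i j) t) with hDdef
  have hD : ∀ i j, HasDerivAt (fun s => (S s)⁻¹ i j) (D i j) t := fun i j =>
    (hNdiff i j).hasDerivAt
  -- differentiate (S s)⁻¹ * S s = 1
  have hmul := entry_mul_deriv hD hS
  have hone : ∀ i j, HasDerivAt (fun s => ((S s)⁻¹ * S s) i j) 0 t := by
    intro i j
    have : (fun s => ((S s)⁻¹ * S s) i j) = fun _ => (1 : Matrix (Fin 2) (Fin 2) ℂ) i j := by
      funext s
      rw [Matrix.nonsing_inv_mul _ ((Matrix.isUnit_iff_isUnit_det _).1 (hinv s))]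
    rw [this]
    exact hasDerivAt_const t _
  have hzero : D * S t + (S t)⁻¹ * S' = 0 := by
    ext i j
    have := (hmul i j).unique (hone i j)
    simpa using this
  have hSN : S t * (S t)⁻¹ = 1 :=
    Matrix.mul_nonsing_inv _ ((Matrix.isUnit_iff_isUnit_det _).1 (hinv t))
  have hDval : D = -((S t)⁻¹ * S' * (S t)⁻¹) := by
    have h1 : D * S t = -((S t)⁻¹ * S') :=
      eq_neg_of_add_eq_zero_left hzero
    calc D = D * (S t * (S t)⁻¹) := by rw [hSN, mul_one]
      _ = (D * S t) * (S t)⁻¹ := by rw [mul_assoc]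
      _ = -((S t)⁻¹ * S') * (S t)⁻¹ := by rw [h1]
      _ = -((S t)⁻¹ * S' * (S t)⁻¹) := by rw [neg_mul]
  intro i j
  rw [← hDval]
  exact hD i j

private lemma entry_trace_deriv {M : ℝ → Matrix (Fin 2) (Fin 2) ℂ}
    {M' : Matrix (Fin 2) (Fin 2) ℂ} {t : ℝ}
    (hM : ∀ i j, HasDerivAt (fun s => M s i j) (M' i j) t) :
    HasDerivAt (fun s => (M s).trace) M'.trace t := by
  have h := HasDerivAt.fun_sum (fun i (_ : i ∈ Finset.univ) => hM i i)
  simpa [Matrix.trace, Matrix.diag] using h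

/-- Sklyanin's construction for even-order flows: if `A(−λ) = A(λ)`, the transition
matrix `T` satisfies `∂ₜT(t,λ) = A(λ)T(t,λ) − T(t,λ)V(t,λ)` and is invertible, and the
boundary matrix `K` satisfies `∂ₜK(t,λ) = V(t,λ)K(t,λ) − K(t,λ)V(t,−λ)`, then for each
`λ` the trace of the generalized monodromy matrix `T(t,λ)K(t,λ)T(t,−λ)⁻¹` is constant
in `t`. -/
theorem trace_monodromy_conserved_even
    (A : ℂ → Matrix (Fin 2) (Fin 2) ℂ) (hA : ∀ lam : ℂ, A (-lam) = A lam)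
    (V T K : ℝ → ℂ → Matrix (Fin 2) (Fin 2) ℂ)
    (hTinv : ∀ (t : ℝ) (lam : ℂ), IsUnit (T t lam))
    (hT : ∀ (t : ℝ) (lam : ℂ) (i j : Fin 2),
      HasDerivAt (fun s => T s lam i j)
        ((A lam * T t lam - T t lam * V t lam) i j) t)
    (hK : ∀ (t : ℝ) (lam : ℂ) (i j : Fin 2),
      HasDerivAt (fun s => K s lam i j)
        ((V t lam * K t lam - K t lam * V t (-lam)) i j) t) :
    ∀ (lam : ℂ) (t₁ t₂ : ℝ),
      (T t₁ lam * K t₁ lam * (T t₁ (-lam))⁻¹).trace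
        = (T t₂ lam * K t₂ lam * (T t₂ (-lam))⁻¹).trace := by
  intro lam t₁ t₂
  set F : ℝ → ℂ := fun t => (T t lam * K t lam * (T t (-lam))⁻¹).trace with hF
  have key : ∀ t, HasDerivAt F 0 t := by
    intro t
    set a := A lam
    set Tt := T t lam
    set Kt := K t lam
    set St := T t (-lam)
    set Nt := (T t (-lam))⁻¹
    set v := V t lam
    set w := V t (-lam)
    have hT' : ∀ i j, HasDerivAt (fun s => T s lam i j) ((a * Tt - Tt * v) i j) t :=
      hT t lam
    have hK' : ∀ i j, HasDerivAt (fun s => K s lam i j) ((v * Kt - Kt * w) i j) t :=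
      hK t lam
    have hS' : ∀ i j, HasDerivAt (fun s => T s (-lam) i j) ((a * St - St * w) i j) t := by
      have := hT t (-lam)
      rwa [hA lam] at this
    have hN' : ∀ i j, HasDerivAt (fun s => (T s (-lam))⁻¹ i j)
        ((-(Nt * (a * St - St * w) * Nt)) i j) t :=
      entry_inv_deriv (fun s => hTinv s (-lam)) hS'
    have hTK : ∀ i j, HasDerivAt (fun s => (T s lam * K s lam) i j)
        (((a * Tt - Tt * v) * Kt + Tt * (v * Kt - Kt * w)) i j) t :=
      entry_mul_deriv hT' hK'
    have hM : ∀ i j, HasDerivAt (fun s => (T s lam * K s lam * (T s (-lam))⁻¹) i j)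
        ((((a * Tt - Tt * v) * Kt + Tt * (v * Kt - Kt * w)) * Nt
          + (Tt * Kt) * (-(Nt * (a * St - St * w) * Nt))) i j) t :=
      entry_mul_deriv hTK hN'
    have htr := entry_trace_deriv hM
    have hNS : Nt * St = 1 :=
      Matrix.nonsing_inv_mul _ ((Matrix.isUnit_iff_isUnit_det _).1 (hTinv t (-lam)))
    have hSN : St * Nt = 1 :=
      Matrix.mul_nonsing_inv _ ((Matrix.isUnit_iff_isUnit_det _).1 (hTinv t (-lam)))
    have hMval : ((a * Tt - Tt * v) * Kt + Tt * (v * Kt - Kt * w)) * Nt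
          + (Tt * Kt) * (-(Nt * (a * St - St * w) * Nt))
        = a * (Tt * Kt * Nt) - (Tt * Kt * Nt) * a := by
      have hNexp : -(Nt * (a * St - St * w) * Nt) = -(Nt * a) + w * Nt := by
        calc -(Nt * (a * St - St * w) * Nt)
            = -(Nt * a * (St * Nt)) + Nt * St * (w * Nt) := by noncomm_ring
          _ = -(Nt * a) + w * Nt := by rw [hSN, hNS]; noncomm_ring
      rw [hNexp]
      noncomm_ring
    rw [hMval] at htr
    have : (a * (Tt * Kt * Nt) - (Tt * Kt * Nt) * a).trace = 0 := by
      rw [Matrix.trace_sub, Matrix.trace_mul_comm, sub_self]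
    rw [this] at htr
    exact htr
  have hdiff : Differentiable ℝ F := fun t => (key t).differentiableAt
  have hderiv : ∀ t, deriv F t = 0 := fun t => (key t).deriv
  exact is_const_of_deriv_eq_zero hdiff hderiv t₁ t₂
end
end

section
/- Let A : ℂ → M₂(ℂ) satisfy A(−λ) = −A(λ) for all λ ∈ ℂ. Let V : ℝ × ℂ → M₂(ℂ), let T : ℝ × ℂ → M₂(ℂ) be differentiable in t with T(t,λ) invertible for all (t,λ) and ∂_t T(t,λ) = A(λ)·T(t,λ) − T(t,λ)·V(t,λ), and let K : ℝ × ℂ → M₂(ℂ) be differentiable in t with ∂_t K(t,λ) = V(t,λ)·K(t,λ) + K(t,λ)·V(−t,−λ). Then for every λ ∈ ℂ, the function t ↦ trace( T(t,λ)·K(t,λ)·T(−t,−λ)⁻¹ ) is constant on ℝ. -/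
open Matrix

noncomputable section

attribute [local instance] Matrix.linftyOpNormedRing Matrix.linftyOpNormedAlgebra

local instance : CompleteSpace (Matrix (Fin 2) (Fin 2) ℂ) := FiniteDimensional.complete ℂ _

lemma hasDerivAt_of_entries {f : ℝ → Matrix (Fin 2) (Fin 2) ℂ}
    {f' : Matrix (Fin 2) (Fin 2) ℂ} {t : ℝ}
    (h : ∀ i j, HasDerivAt (fun s => f s i j) (f' i j) t) :
    HasDerivAt f f' t := by
  have key : HasDerivAt (fun s => ∑ i : Fin 2, ∑ j : Fin 2,
      (f s i j) • Matrix.single i j (1 : ℂ))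
      (∑ i : Fin 2, ∑ j : Fin 2, (f' i j) • Matrix.single i j (1 : ℂ)) t := by
    refine HasDerivAt.fun_sum fun i _ => HasDerivAt.fun_sum fun j _ => ?_
    exact (h i j).smul_const _
  have e1 : ∀ (M : Matrix (Fin 2) (Fin 2) ℂ),
      (∑ i : Fin 2, ∑ j : Fin 2, (M i j) • Matrix.single i j (1 : ℂ)) = M := by
    intro M
    conv_rhs => rw [matrix_eq_sum_single M]
    simp [smul_single]
  simpa only [e1] using key

/-- Conservation for odd-order flows with time-reversal boundary conditions: if
`A(−λ) = −A(λ)`, the transition matrix `T` satisfies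
`∂ₜT(t,λ) = A(λ)T(t,λ) − T(t,λ)V(t,λ)` and is invertible, and the dynamical boundary
matrix `K` satisfies `∂ₜK(t,λ) = V(t,λ)K(t,λ) + K(t,λ)V(−t,−λ)`, then for each `λ` the
trace of the generalized time-reversed monodromy matrix `T(t,λ)K(t,λ)T(−t,−λ)⁻¹` is
constant in `t`. -/
theorem trace_monodromy_conserved_odd
    (A : ℂ → Matrix (Fin 2) (Fin 2) ℂ) (hA : ∀ lam : ℂ, A (-lam) = -A lam)
    (V T K : ℝ → ℂ → Matrix (Fin 2) (Fin 2) ℂ)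
    (hTinv : ∀ (t : ℝ) (lam : ℂ), IsUnit (T t lam))
    (hT : ∀ (t : ℝ) (lam : ℂ) (i j : Fin 2),
      HasDerivAt (fun s => T s lam i j)
        ((A lam * T t lam - T t lam * V t lam) i j) t)
    (hK : ∀ (t : ℝ) (lam : ℂ) (i j : Fin 2),
      HasDerivAt (fun s => K s lam i j)
        ((V t lam * K t lam + K t lam * V (-t) (-lam)) i j) t) :
    ∀ (lam : ℂ) (t₁ t₂ : ℝ),
      (T t₁ lam * K t₁ lam * (T (-t₁) (-lam))⁻¹).trace
        = (T t₂ lam * K t₂ lam * (T (-t₂) (-lam))⁻¹).trace := by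
  intro lam t₁ t₂
  have main : ∀ t : ℝ,
      HasDerivAt (fun s => (T s lam * K s lam * (T (-s) (-lam))⁻¹).trace) 0 t := by
    intro t
    set S : Matrix (Fin 2) (Fin 2) ℂ := T (-t) (-lam) with hS
    set P : Matrix (Fin 2) (Fin 2) ℂ := S⁻¹ with hP
    have hU : IsUnit S := hTinv (-t) (-lam)
    have hdet : IsUnit S.det := (Matrix.isUnit_iff_isUnit_det S).mp hU
    have h1 : P * S = 1 := Matrix.nonsing_inv_mul S hdet
    have h2 : S * P = 1 := Matrix.mul_nonsing_inv S hdet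
    -- derivative of T(·, lam)
    have hTd : HasDerivAt (fun s => T s lam)
        (A lam * T t lam - T t lam * V t lam) t :=
      hasDerivAt_of_entries (fun i j => hT t lam i j)
    have hKd : HasDerivAt (fun s => K s lam)
        (V t lam * K t lam + K t lam * V (-t) (-lam)) t :=
      hasDerivAt_of_entries (fun i j => hK t lam i j)
    -- derivative of S(s) = T(-s, -lam)
    have hSd : HasDerivAt (fun s => T (-s) (-lam))
        (A lam * S + S * V (-t) (-lam)) t := by
      have h1' : HasDerivAt (fun s => T s (-lam))
          (A (-lam) * S - S * V (-t) (-lam)) (-t) :=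
        hasDerivAt_of_entries (fun i j => hT (-t) (-lam) i j)
      have h2' := h1'.scomp t (hasDerivAt_neg t)
      have : ((-1 : ℝ) • (A (-lam) * S - S * V (-t) (-lam)))
          = A lam * S + S * V (-t) (-lam) := by
        rw [hA lam, neg_one_smul]
        simp only [neg_mul, neg_sub, sub_neg_eq_add]
        abel
      simp [Function.comp_def, this] at h2'
      exact h2'
    -- derivative of the inverse
    have hinv : HasDerivAt (fun s => (T (-s) (-lam))⁻¹)
        (-(P * (A lam * S + S * V (-t) (-lam)) * P)) t := by
      obtain ⟨u, hu⟩ := hU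
      have hfd := (hasFDerivAt_ringInverse (𝕜 := ℝ) u)
      rw [hu, hS] at hfd
      have hcomp := hfd.comp_hasDerivAt t hSd
      have hRinv : (fun s : ℝ => Ring.inverse (T (-s) (-lam)))
          = fun s : ℝ => (T (-s) (-lam))⁻¹ := by
        funext s
        rw [Matrix.nonsing_inv_eq_ringInverse]
      have hcoe : ((u⁻¹ : (Matrix (Fin 2) (Fin 2) ℂ)ˣ) : Matrix (Fin 2) (Fin 2) ℂ) = P := by
        rw [hP, ← hu, Matrix.coe_units_inv]
      simp [Function.comp_def, Matrix.nonsing_inv_eq_ringInverse,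
        ContinuousLinearMap.mulLeftRight_apply, hcoe] at hcomp ⊢
      exact hcomp
    -- derivative of the product
    have hMd := (hTd.mul hKd).mul hinv
    -- trace
    have htr := ((Matrix.traceLinearMap (Fin 2) ℝ ℂ).toContinuousLinearMap.hasFDerivAt).comp_hasDerivAt t hMd
    have hzero :
        Matrix.trace (((A lam * T t lam - T t lam * V t lam) * K t lam
            + T t lam * (V t lam * K t lam + K t lam * V (-t) (-lam))) * P
          + T t lam * K t lam * -(P * (A lam * S + S * V (-t) (-lam)) * P)) = 0 := by
      have h1' : ∀ X : Matrix (Fin 2) (Fin 2) ℂ, P * (S * X) = X := fun X => by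
        rw [← mul_assoc, h1, one_mul]
      have h2' : ∀ X : Matrix (Fin 2) (Fin 2) ℂ, S * (P * X) = X := fun X => by
        rw [← mul_assoc, h2, one_mul]
      have hD : ((A lam * T t lam - T t lam * V t lam) * K t lam
            + T t lam * (V t lam * K t lam + K t lam * V (-t) (-lam))) * P
          + T t lam * K t lam * -(P * (A lam * S + S * V (-t) (-lam)) * P)
          = A lam * (T t lam * K t lam * P) - (T t lam * K t lam * P) * A lam := by
        simp only [sub_mul, add_mul, mul_add, mul_sub, mul_neg, neg_mul, mul_assoc,
          h1, h2, h1', h2', mul_one, one_mul]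
        abel
      rw [hD, Matrix.trace_sub, Matrix.trace_mul_comm, sub_self]
    rw [← hS, ← hP] at htr
    simp only [LinearMap.coe_toContinuousLinearMap', Matrix.traceLinearMap_apply,
      Function.comp_def] at htr
    rw [← hzero]
    exact htr
  have hdiff : Differentiable ℝ (fun s => (T s lam * K s lam * (T (-s) (-lam))⁻¹).trace) :=
    fun x => (main x).differentiableAt
  have := is_const_of_deriv_eq_zero hdiff (fun x => (main x).deriv) t₁ t₂
  exact this
end
end

section
/- Let β ∈ ℝ, ε ∈ {1, −1}, and let p : ℝ → ℂ satisfy |p(t) − ε·p(−t)|² ≤ β² for all t ∈ ℝ. Set Ω(t) := √(β² − |p(t) − ε·p(−t)|²) (the nonnegative real square root). For t ∈ ℝ and λ ∈ ℂ define the 2×2 matrix K(λ,t) with entries K₁₁ = −ελ + iεΩ(t), K₁₂ = i( conj(p(t)) − ε·conj(p(−t)) ), K₂₁ = i( p(−t) − ε·p(t) ), K₂₂ = λ + iΩ(t). Then for all λ ∈ ℂ and all t ∈ ℝ, K(λ,−t)·K(−λ,t) = −(λ² + β²)·I, where I is the 2×2 identity matrix. -/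
open Complex Matrix ComplexConjugate

noncomputable section

/-- `Ω(t) = √(β² − |p(t) − ε p(−t)|²)`, the nonnegative real square root. -/
def Omega2 (β : ℝ) (ε : ℂ) (p : ℝ → ℂ) (t : ℝ) : ℝ :=
  Real.sqrt (β ^ 2 - ‖p t - ε * p (-t)‖ ^ 2)

/-- The dynamical boundary matrix `K(λ,t)` for the time-reversal boundary conditions of
the odd-order NLS equations: `K₁₁ = −ελ + iεΩ(t)`, `K₁₂ = i(conj p(t) − ε conj p(−t))`,
`K₂₁ = i(p(−t) − ε p(t))`, `K₂₂ = λ + iΩ(t)`. -/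
def Kodd (β : ℝ) (ε : ℂ) (p : ℝ → ℂ) (lam : ℂ) (t : ℝ) : Matrix (Fin 2) (Fin 2) ℂ :=
  !![-ε * lam + I * ε * ((Omega2 β ε p t : ℝ) : ℂ), I * (conj (p t) - ε * conj (p (-t)));
     I * (p (-t) - ε * p t), lam + I * ((Omega2 β ε p t : ℝ) : ℂ)]

/-- The time-reversal boundary matrix satisfies `K(λ,−t)K(−λ,t) = −(λ² + β²) I`. -/
theorem Kodd_inversion (β : ℝ) (ε : ℂ) (hε : ε = 1 ∨ ε = -1) (p : ℝ → ℂ)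
    (h : ∀ t : ℝ, ‖p t - ε * p (-t)‖ ^ 2 ≤ β ^ 2) :
    ∀ (lam : ℂ) (t : ℝ),
      Kodd β ε p lam (-t) * Kodd β ε p (-lam) t
        = (-(lam ^ 2 + (β : ℂ) ^ 2)) • (1 : Matrix (Fin 2) (Fin 2) ℂ) := by
  intro lam t
  have hε2 : ε ^ 2 = 1 := by rcases hε with h1 | h1 <;> simp [h1]
  have hcε : conj ε = ε := by rcases hε with h1 | h1 <;> simp [h1]
  have hnε : ‖ε‖ = 1 := by rcases hε with h1 | h1 <;> simp [h1]
  have hnorm : ‖p (-t) - ε * p t‖ = ‖p t - ε * p (-t)‖ := by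
    have heq : p (-t) - ε * p t = -ε * (p t - ε * p (-t)) := by
      linear_combination (-(p (-t))) * hε2
    rw [heq, norm_mul, norm_neg, hnε, one_mul]
  have hΩeq : Omega2 β ε p (-t) = Omega2 β ε p t := by
    unfold Omega2
    rw [neg_neg, hnorm]
  have hnn : 0 ≤ β ^ 2 - ‖p t - ε * p (-t)‖ ^ 2 := sub_nonneg.mpr (h t)
  have key : ((Omega2 β ε p t : ℝ) : ℂ) ^ 2
      = (β : ℂ) ^ 2 - (p t - ε * p (-t)) * conj (p t - ε * p (-t)) := by
    have h1 : ((Omega2 β ε p t : ℝ) : ℂ) ^ 2 = ((Omega2 β ε p t ^ 2 : ℝ) : ℂ) := by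
      push_cast; ring
    rw [h1, Omega2, Real.sq_sqrt hnn]
    rw [Complex.mul_conj]
    push_cast [Complex.normSq_eq_norm_sq]
    ring
  simp only [map_sub, _root_.map_mul, hcε] at key
  ext i j
  fin_cases i <;> fin_cases j <;>
    simp [Kodd, Matrix.mul_apply, Fin.sum_univ_two, Matrix.one_apply, hΩeq, neg_neg,
      map_sub, _root_.map_mul, hcε, smul_eq_mul] <;>
    first
    | linear_combination
        (-ε * conj (p (-t)) * p t - ε * conj (p t) * p (-t)
          + ε ^ 2 * ((Omega2 β ε p t : ℝ) : ℂ) ^ 2 + ε ^ 2 * conj (p t) * p t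
          + conj (p (-t)) * p (-t)) * Complex.I_sq
        + (p (-t) * conj (p (-t)) - lam ^ 2 - ((Omega2 β ε p t : ℝ) : ℂ) ^ 2
          - conj (p t) * p t) * hε2
        - key
    | linear_combination (lam * I * conj (p (-t)) - I ^ 2 * ((Omega2 β ε p t : ℝ) : ℂ) * conj (p (-t))) * hε2
    | linear_combination (-(I * p (-t) * lam) - I ^ 2 * p (-t) * ((Omega2 β ε p t : ℝ) : ℂ)) * hε2
    | linear_combination
        (-(p t * ε * conj (p (-t))) + p t * conj (p t) - ε * p (-t) * conj (p t)
          + ε ^ 2 * p (-t) * conj (p (-t)) + ((Omega2 β ε p t : ℝ) : ℂ) ^ 2) * Complex.I_sq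
        - key
end
end

section
/- Let β ∈ ℝ and let u be a smooth complex-valued function on [0,∞) × ℝ solving the NLS equation i∂_t u + ∂_x²u + 2|u|²u = 0 there. Assume: (a) for each t, u(·,t) and ∂_x u(·,t) tend to 0 as x → ∞ and x ↦ |u(x,t)|² is integrable on [0,∞); (b) the function t ↦ ∫₀^∞ |u(x,t)|² dx is differentiable with derivative ∫₀^∞ ∂_t|u(x,t)|² dx (differentiation under the integral is valid); (c) 4|u(0,t)|² < β² for all t; and (d) u satisfies the boundary condition ∂_t u(0,t) − 2i|u(0,t)|²·u(0,t) + i·Ω(t)·∂_x u(0,t) = 0 for all t, where Ω(t) := √(β² − 4|u(0,t)|²) (positive real square root). Then the quantity I₁(t) := 2∫₀^∞ |u(x,t)|² dx + Ω(t) is constant in t. -/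
open Complex ComplexConjugate MeasureTheory Filter

noncomputable section

lemma hasDerivAt_slice_x (u : ℝ × ℝ → ℂ) (hu : ContDiff ℝ (⊤ : ℕ∞) u) (x t : ℝ) :
    HasDerivAt (fun y => u (y, t)) (fderiv ℝ u (x, t) (1, 0)) x := by
  have h1 : HasDerivAt (fun y : ℝ => ((y, t) : ℝ × ℝ)) ((1 : ℝ), (0 : ℝ)) x :=
    (hasDerivAt_id x).prodMk (hasDerivAt_const x t)
  exact ((hu.differentiable (by simp) (x, t)).hasFDerivAt).comp_hasDerivAt x h1

lemma ux_eq (u : ℝ × ℝ → ℂ) (hu : ContDiff ℝ (⊤ : ℕ∞) u) (x t : ℝ) :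
    ux u x t = fderiv ℝ u (x, t) (1, 0) := (hasDerivAt_slice_x u hu x t).deriv

lemma hasDerivAt_slice_t (u : ℝ × ℝ → ℂ) (hu : ContDiff ℝ (⊤ : ℕ∞) u) (x t : ℝ) :
    HasDerivAt (fun s => u (x, s)) (fderiv ℝ u (x, t) (0, 1)) t := by
  have h1 : HasDerivAt (fun s : ℝ => ((x, s) : ℝ × ℝ)) ((0 : ℝ), (1 : ℝ)) t :=
    (hasDerivAt_const t x).prodMk (hasDerivAt_id t)
  exact ((hu.differentiable (by simp) (x, t)).hasFDerivAt).comp_hasDerivAt t h1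

lemma hasDerivAt_ux (u : ℝ × ℝ → ℂ) (hu : ContDiff ℝ (⊤ : ℕ∞) u) (x t : ℝ) :
    HasDerivAt (fun y => u (y, t)) (ux u x t) x := by
  rw [ux_eq u hu]; exact hasDerivAt_slice_x u hu x t

lemma hasDerivAt_ut (u : ℝ × ℝ → ℂ) (hu : ContDiff ℝ (⊤ : ℕ∞) u) (x t : ℝ) :
    HasDerivAt (fun s => u (x, s)) (ut u x t) t := by
  have := hasDerivAt_slice_t u hu x t
  have h2 : ut u x t = fderiv ℝ u (x, t) (0, 1) := this.deriv
  rw [h2]; exact this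

lemma contDiff_ux (u : ℝ × ℝ → ℂ) (hu : ContDiff ℝ (⊤ : ℕ∞) u) :
    ContDiff ℝ (⊤ : ℕ∞) (fun p : ℝ × ℝ => ux u p.1 p.2) := by
  have h : (fun p : ℝ × ℝ => ux u p.1 p.2)
      = fun p : ℝ × ℝ => (ContinuousLinearMap.apply ℝ ℂ ((1 : ℝ), (0 : ℝ))) (fderiv ℝ u p) := by
    funext p
    simp [ux_eq u hu p.1 p.2]
  rw [h]
  exact (ContinuousLinearMap.apply ℝ ℂ ((1 : ℝ), (0 : ℝ))).contDiff.comp (hu.fderiv_right (by simp))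

lemma hasDerivAt_uxx (u : ℝ × ℝ → ℂ) (hu : ContDiff ℝ (⊤ : ℕ∞) u) (x t : ℝ) :
    HasDerivAt (fun y => ux u y t) (uxx u x t) x := by
  have hd : DifferentiableAt ℝ (fun y => ux u y t) x := by
    have : (fun y => ux u y t) = (fun p : ℝ × ℝ => ux u p.1 p.2) ∘ (fun y => (y, t)) := rfl
    rw [this]
    exact ((contDiff_ux u hu).differentiable (by simp) (x, t)).comp x
      ((differentiableAt_id.prodMk (differentiableAt_const t)))
  exact hd.hasDerivAt

/-- flux density `q = Im(conj u * u_x)` -/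
def qq (u : ℝ × ℝ → ℂ) (x t : ℝ) : ℝ := ((starRingEnd ℂ) (u (x, t)) * ux u x t).im

lemma hasDerivAt_norm_sq_t (u : ℝ × ℝ → ℂ) (hu : ContDiff ℝ (⊤ : ℕ∞) u) (x t : ℝ) :
    HasDerivAt (fun s => ‖u (x, s)‖ ^ 2)
      (2 * ((starRingEnd ℂ) (u (x, t)) * ut u x t).re) t := by
  have h1 := hasDerivAt_ut u hu x t
  have h2 : HasDerivAt (fun s => (starRingEnd ℂ) (u (x, s)))
      ((starRingEnd ℂ) (ut u x t)) t := h1.star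
  have h3 := h2.mul h1
  have h4 := (Complex.reCLM.hasFDerivAt.comp_hasDerivAt t h3)
  have e1 : (fun s => Complex.reCLM ((starRingEnd ℂ) (u (x, s)) * u (x, s)))
      = fun s => ‖u (x, s)‖ ^ 2 := by
    funext s
    simp [Complex.mul_re, Complex.sq_norm, Complex.normSq_apply]
  have e2 : Complex.reCLM ((starRingEnd ℂ) (ut u x t) * u (x, t)
      + (starRingEnd ℂ) (u (x, t)) * ut u x t)
      = 2 * ((starRingEnd ℂ) (u (x, t)) * ut u x t).re := by
    simp [Complex.add_re, Complex.mul_re]; ring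
  have h4' := h4.congr_of_eventuallyEq (Filter.Eventually.of_forall (fun s => (congrFun e1 s).symm))
  rw [e2] at h4'
  exact h4'

lemma hasDerivAt_flux_x (u : ℝ × ℝ → ℂ) (hu : ContDiff ℝ (⊤ : ℕ∞) u) (x t : ℝ) :
    HasDerivAt (fun y => -2 * qq u y t)
      (-2 * ((starRingEnd ℂ) (u (x, t)) * uxx u x t).im) x := by
  have h1 := hasDerivAt_ux u hu x t
  have h2 : HasDerivAt (fun y => (starRingEnd ℂ) (u (y, t)))
      ((starRingEnd ℂ) (ux u x t)) x := h1.star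
  have h3 := h2.mul (hasDerivAt_uxx u hu x t)
  have h4 := (Complex.imCLM.hasFDerivAt.comp_hasDerivAt x h3)
  have h5 := h4.const_mul (-2 : ℝ)
  have e1 : (fun y => -2 * Complex.imCLM ((starRingEnd ℂ) (u (y, t)) * ux u y t))
      = fun y => -2 * qq u y t := rfl
  have e2 : -2 * Complex.imCLM ((starRingEnd ℂ) (ux u x t) * ux u x t
      + (starRingEnd ℂ) (u (x, t)) * uxx u x t)
      = -2 * ((starRingEnd ℂ) (u (x, t)) * uxx u x t).im := by
    simp [Complex.add_im, Complex.mul_im]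
    ring
  have h5' := h5.congr_of_eventuallyEq (Filter.Eventually.of_forall (fun y => (congrFun e1 y).symm))
  rw [e2] at h5'
  exact h5'

lemma nls_re_eq (u : ℝ × ℝ → ℂ)
    (hNLS : ∀ x t : ℝ, 0 ≤ x →
      I * ut u x t + uxx u x t + 2 * (‖u (x, t)‖ : ℂ) ^ 2 * u (x, t) = 0)
    (x t : ℝ) (hx : 0 ≤ x) :
    2 * ((starRingEnd ℂ) (u (x, t)) * ut u x t).re
      = -2 * ((starRingEnd ℂ) (u (x, t)) * uxx u x t).im := by
  have h := hNLS x t hx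
  have hre := congrArg Complex.re h
  have him := congrArg Complex.im h
  simp only [Complex.add_re, Complex.add_im, Complex.mul_re, Complex.mul_im, Complex.I_re,
    Complex.I_im, Complex.ofReal_re, Complex.ofReal_im, Complex.zero_re, Complex.zero_im,
    ← Complex.ofReal_pow, Complex.re_ofNat, Complex.im_ofNat] at hre him
  simp only [Complex.mul_re, Complex.mul_im, Complex.conj_re, Complex.conj_im]
  linear_combination 2 * (u (x, t)).re * him - 2 * (u (x, t)).im * hre

lemma deriv_norm_sq_eq (u : ℝ × ℝ → ℂ) (hu : ContDiff ℝ (⊤ : ℕ∞) u) (x t : ℝ) :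
    deriv (fun s => ‖u (x, s)‖ ^ 2) t
      = 2 * ((starRingEnd ℂ) (u (x, t)) * ut u x t).re :=
  (hasDerivAt_norm_sq_t u hu x t).deriv

lemma tendsto_flux (u : ℝ × ℝ → ℂ)
    (hdecay : ∀ t : ℝ, Tendsto (fun x => u (x, t)) atTop (nhds 0)
      ∧ Tendsto (fun x => ux u x t) atTop (nhds 0)) (t : ℝ) :
    Tendsto (fun y => -2 * qq u y t) atTop (nhds 0) := by
  have h1 : Tendsto (fun x => (starRingEnd ℂ) (u (x, t))) atTop (nhds 0) := by
    have := ((Complex.continuous_conj.tendsto 0).comp (hdecay t).1)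
    simpa [Function.comp_def] using this
  have h2 := h1.mul (hdecay t).2
  rw [zero_mul] at h2
  have h3 : Tendsto (fun x => ((starRingEnd ℂ) (u (x, t)) * ux u x t).im) atTop
      (nhds ((0 : ℂ).im)) := (Complex.continuous_im.tendsto 0).comp h2
  rw [Complex.zero_im] at h3
  have h4 := h3.const_mul (-2 : ℝ)
  rw [mul_zero] at h4
  exact h4

lemma integral_deriv_eq (u : ℝ × ℝ → ℂ) (hu : ContDiff ℝ (⊤ : ℕ∞) u)
    (hNLS : ∀ x t : ℝ, 0 ≤ x →
      I * ut u x t + uxx u x t + 2 * (‖u (x, t)‖ : ℂ) ^ 2 * u (x, t) = 0)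
    (hdecay : ∀ t : ℝ, Tendsto (fun x => u (x, t)) atTop (nhds 0)
      ∧ Tendsto (fun x => ux u x t) atTop (nhds 0)) (t : ℝ)
    (hInt : IntegrableOn (fun x => deriv (fun s => ‖u (x, s)‖ ^ 2) t) (Set.Ioi (0 : ℝ))) :
    ∫ x in Set.Ioi (0 : ℝ), deriv (fun s => ‖u (x, s)‖ ^ 2) t = 2 * qq u 0 t := by
  have hder : ∀ x ∈ Set.Ici (0 : ℝ), HasDerivAt (fun y => -2 * qq u y t)
      (deriv (fun s => ‖u (x, s)‖ ^ 2) t) x := by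
    intro x hx
    have h1 := hasDerivAt_flux_x u hu x t
    have h2 : deriv (fun s => ‖u (x, s)‖ ^ 2) t
        = -2 * ((starRingEnd ℂ) (u (x, t)) * uxx u x t).im := by
      rw [deriv_norm_sq_eq u hu x t, nls_re_eq u hNLS x t hx]
    rw [h2]
    exact h1
  have := integral_Ioi_of_hasDerivAt_of_tendsto' hder hInt (tendsto_flux u hdecay t)
  rw [this]
  ring

lemma omega_hasDerivAt (β : ℝ) (u : ℝ × ℝ → ℂ) (hu : ContDiff ℝ (⊤ : ℕ∞) u)
    (hβ : ∀ t : ℝ, 4 * ‖u (0, t)‖ ^ 2 < β ^ 2)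
    (hbc : ∀ t : ℝ,
      ut u 0 t - 2 * I * (‖u (0, t)‖ : ℂ) ^ 2 * u (0, t)
        + I * ((Real.sqrt (β ^ 2 - 4 * ‖u (0, t)‖ ^ 2) : ℝ) : ℂ) * ux u 0 t = 0)
    (t : ℝ) :
    HasDerivAt (fun s => Real.sqrt (β ^ 2 - 4 * ‖u (0, s)‖ ^ 2)) (-4 * qq u 0 t) t := by
  set s : ℝ := Real.sqrt (β ^ 2 - 4 * ‖u (0, t)‖ ^ 2) with hs
  have hpos : 0 < β ^ 2 - 4 * ‖u (0, t)‖ ^ 2 := by linarith [hβ t]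
  have hspos : 0 < s := Real.sqrt_pos.mpr hpos
  -- boundary identity
  have hkey : ((starRingEnd ℂ) (u (0, t)) * ut u 0 t).re = s * qq u 0 t := by
    have h := hbc t
    have hre := congrArg Complex.re h
    have him := congrArg Complex.im h
    simp only [Complex.add_re, Complex.add_im, Complex.sub_re, Complex.sub_im,
      Complex.mul_re, Complex.mul_im, Complex.I_re, Complex.I_im,
      Complex.ofReal_re, Complex.ofReal_im, Complex.zero_re, Complex.zero_im,
      ← Complex.ofReal_pow, Complex.re_ofNat, Complex.im_ofNat] at hre him
    simp only [qq, Complex.mul_re, Complex.mul_im, Complex.conj_re, Complex.conj_im]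
    linear_combination (u (0, t)).re * hre + (u (0, t)).im * him
  -- derivative of the inner function
  have hN := hasDerivAt_norm_sq_t u hu 0 t
  have hy : HasDerivAt (fun σ => β ^ 2 - 4 * ‖u (0, σ)‖ ^ 2)
      (-(8 * (s * qq u 0 t))) t := by
    have := (hN.const_mul (4 : ℝ)).const_sub (β ^ 2)
    refine this.congr_deriv ?_
    rw [hkey]; ring
  have hsq := (Real.hasDerivAt_sqrt (ne_of_gt hpos)).comp t hy
  refine hsq.congr_deriv ?_
  rw [← hs]
  field_simp
  ring

/-- the density `phi = 2 Re(conj u * u_t)` -/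
def phi (u : ℝ × ℝ → ℂ) (x t : ℝ) : ℝ := 2 * ((starRingEnd ℂ) (u (x, t)) * ut u x t).re
section helpers
variable (u : ℝ × ℝ → ℂ)

lemma ut_eq (hu : ContDiff ℝ (⊤ : ℕ∞) u) (x t : ℝ) : ut u x t = fderiv ℝ u (x, t) (0, 1) :=
  (hasDerivAt_slice_t u hu x t).deriv

lemma contDiff_ut (hu : ContDiff ℝ (⊤ : ℕ∞) u) : ContDiff ℝ (⊤ : ℕ∞) (fun p : ℝ × ℝ => ut u p.1 p.2) := by
  have h : (fun p : ℝ × ℝ => ut u p.1 p.2)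
      = fun p : ℝ × ℝ => (ContinuousLinearMap.apply ℝ ℂ ((0 : ℝ), (1 : ℝ))) (fderiv ℝ u p) := by
    funext p
    simp [ut_eq u hu p.1 p.2]
  rw [h]
  exact (ContinuousLinearMap.apply ℝ ℂ ((0 : ℝ), (1 : ℝ))).contDiff.comp (hu.fderiv_right (by simp))

lemma continuous_qq (hu : ContDiff ℝ (⊤ : ℕ∞) u) : Continuous (fun p : ℝ × ℝ => qq u p.1 p.2) := by
  apply Complex.continuous_im.comp
  exact ((Complex.continuous_conj.comp hu.continuous).mul (contDiff_ux u hu).continuous)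

lemma continuous_phi (hu : ContDiff ℝ (⊤ : ℕ∞) u) : Continuous (fun p : ℝ × ℝ => phi u p.1 p.2) := by
  apply Continuous.mul continuous_const
  apply Complex.continuous_re.comp
  exact ((Complex.continuous_conj.comp (hu.continuous)).mul (contDiff_ut u hu).continuous)

end helpers

section Kpart
variable (u : ℝ × ℝ → ℂ)

lemma hasDerivAt_norm_sq_t'' (hu : ContDiff ℝ (⊤ : ℕ∞) u) (x t : ℝ) :
    HasDerivAt (fun s => ‖u (x, s)‖ ^ 2) (phi u x t) t :=
  hasDerivAt_norm_sq_t u hu x t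

lemma flux_deriv (hu : ContDiff ℝ (⊤ : ℕ∞) u)
    (hNLS : ∀ x t : ℝ, 0 ≤ x →
      I * ut u x t + uxx u x t + 2 * (‖u (x, t)‖ : ℂ) ^ 2 * u (x, t) = 0)
    (x t : ℝ) (hx : 0 ≤ x) :
    HasDerivAt (fun y => -2 * qq u y t) (phi u x t) x := by
  have h : phi u x t = -2 * ((starRingEnd ℂ) (u (x, t)) * uxx u x t).im :=
    nls_re_eq u hNLS x t hx
  rw [h]
  exact hasDerivAt_flux_x u hu x t

lemma hasDerivAt_K (hu : ContDiff ℝ (⊤ : ℕ∞) u)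
    (hNLS : ∀ x t : ℝ, 0 ≤ x →
      I * ut u x t + uxx u x t + 2 * (‖u (x, t)‖ : ℂ) ^ 2 * u (x, t) = 0) (n : ℝ) (hn : 0 ≤ n) (σ₀ : ℝ) :
    HasDerivAt (fun σ => ∫ x in Set.Ioc (0 : ℝ) n, ‖u (x, σ)‖ ^ 2)
      (2 * qq u 0 σ₀ - 2 * qq u n σ₀) σ₀ := by
  obtain ⟨C, hC⟩ : ∃ C, ∀ p ∈ (Set.Icc (0 : ℝ) n) ×ˢ (Set.Icc (σ₀ - 1) (σ₀ + 1)),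
      ‖phi u p.1 p.2‖ ≤ C :=
    (isCompact_Icc.prod isCompact_Icc).exists_bound_of_continuousOn
      (continuous_phi u hu).continuousOn
  have hcont : ∀ σ : ℝ, Continuous (fun x => ‖u (x, σ)‖ ^ 2) := fun σ =>
    ((hu.continuous.comp (continuous_id.prodMk continuous_const)).norm.pow 2)
  have hcont' : ∀ σ : ℝ, Continuous (fun x => phi u x σ) := fun σ =>
    (continuous_phi u hu).comp (continuous_id.prodMk continuous_const)
  have key := hasDerivAt_integral_of_dominated_loc_of_deriv_le
    (μ := volume.restrict (Set.Ioc (0 : ℝ) n))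
    (F := fun σ x => ‖u (x, σ)‖ ^ 2) (F' := fun σ x => phi u x σ) (x₀ := σ₀)
    (bound := fun _ => C) (Metric.ball_mem_nhds σ₀ one_pos)
    (Eventually.of_forall fun σ => (hcont σ).aestronglyMeasurable)
    ((hcont σ₀).integrableOn_Ioc)
    ((hcont' σ₀).aestronglyMeasurable)
    ((ae_restrict_iff' measurableSet_Ioc).2 (Eventually.of_forall fun x hx σ hσ => by
      refine hC (x, σ) ⟨⟨hx.1.le, hx.2⟩, ?_⟩
      rw [Real.ball_eq_Ioo] at hσ
      exact ⟨hσ.1.le, hσ.2.le⟩))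
    (integrable_const C)
    (Eventually.of_forall fun x σ _ => hasDerivAt_norm_sq_t'' u hu x σ)
  have hval : (∫ x in Set.Ioc (0 : ℝ) n, phi u x σ₀) = 2 * qq u 0 σ₀ - 2 * qq u n σ₀ := by
    rw [← intervalIntegral.integral_of_le hn]
    rw [intervalIntegral.integral_eq_sub_of_hasDerivAt
      (f := fun y => -2 * qq u y σ₀) (f' := fun x => phi u x σ₀)
      (fun x hx => by
        refine flux_deriv u hu hNLS x σ₀ ?_
        rw [Set.uIcc_of_le hn] at hx
        exact hx.1)
      ((hcont' σ₀).intervalIntegrable 0 n)]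
    ring
  rw [← hval]
  exact key.2
end Kpart

lemma no_bad_point (u : ℝ × ℝ → ℂ) (hu : ContDiff ℝ (⊤ : ℕ∞) u)
    (H D2 : ℝ → ℝ)
    (hH : ∀ σ : ℝ, HasDerivAt H (D2 σ) σ)
    (hdich : ∀ σ : ℝ, D2 σ = 2 * qq u 0 σ ∨ D2 σ = 0)
    (hqtend : ∀ σ : ℝ, Tendsto (fun x : ℝ => qq u x σ) atTop (nhds 0))
    (hKder : ∀ n : ℝ, 0 ≤ n → ∀ σ₀ : ℝ,
      HasDerivAt (fun σ => ∫ x in Set.Ioc (0 : ℝ) n, ‖u (x, σ)‖ ^ 2)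
        (2 * qq u 0 σ₀ - 2 * qq u n σ₀) σ₀)
    (hKtend : ∀ σ : ℝ, Tendsto (fun n : ℕ => ∫ x in Set.Ioc (0 : ℝ) (n : ℝ), ‖u (x, σ)‖ ^ 2)
      atTop (nhds (H σ)))
    (t₀ : ℝ) (hv : 2 * D2 t₀ - 4 * qq u 0 t₀ ≠ 0) : False := by
  classical
  obtain ⟨W, hW⟩ : ∃ W : ℝ → ℝ, W = fun σ => 2 * D2 σ - 4 * qq u 0 σ := ⟨_, rfl⟩
  obtain ⟨v, hvdef⟩ : ∃ v : ℝ, v = W t₀ := ⟨_, rfl⟩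
  have hvne : v ≠ 0 := by rw [hvdef, hW]; exact hv
  have hvpos : 0 < |v| := abs_pos.2 hvne
  have hWdich : ∀ σ : ℝ, W σ = 0 ∨ W σ = -(4 * qq u 0 σ) := by
    intro σ
    rcases hdich σ with h | h
    · left; simp only [hW, h]; ring
    · right; simp only [hW, h]; ring
  have hq0cont : Continuous (fun σ : ℝ => qq u 0 σ) :=
    (continuous_qq u hu).comp (continuous_const.prodMk continuous_id)
  have hqncont : ∀ n : ℝ, Continuous (fun σ => qq u n σ) := fun n =>
    (continuous_qq u hu).comp (continuous_const.prodMk continuous_id)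
  -- choose η from continuity
  obtain ⟨η, hη, hηball⟩ : ∃ η > 0, ∀ s : ℝ, |s - t₀| < η →
      |4 * qq u 0 s - 4 * qq u 0 t₀| < |v| / 4 := by
    obtain ⟨δ, hδ, hδ'⟩ := Metric.continuousAt_iff.1 (continuous_const.mul hq0cont : Continuous fun σ => (4:ℝ) * qq u 0 σ).continuousAt
      (|v| / 4) (by positivity)
    refine ⟨δ, hδ, fun s hs => ?_⟩
    have := hδ' (show dist s t₀ < δ by rwa [Real.dist_eq])
    rwa [Real.dist_eq] at this
  have hct₀ : 4 * qq u 0 t₀ = -v := by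
    rcases hWdich t₀ with h | h
    · rw [hvdef] at hvne; exact absurd h hvne
    · rw [hvdef, h]; ring
  -- W never equals v/2 on the ball
  have hne : ∀ s ∈ Metric.ball t₀ η, W s ≠ v / 2 := by
    intro s hs
    have hsd : |s - t₀| < η := by rwa [Metric.mem_ball, Real.dist_eq] at hs
    rcases hWdich s with h | h
    · rw [h]; intro hc
      apply hvne; linarith
    · rw [h]; intro hc
      have h1 := hηball s hsd
      rw [hct₀] at h1
      have h2 : 4 * qq u 0 s = -(v / 2) := by linarith
      rw [h2] at h1
      have h3 : |-(v / 2) - -v| = |v| / 2 := by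
        have : -(v / 2) - -v = v / 2 := by ring
        rw [this, abs_div]
        norm_num
      rw [h3] at h1
      linarith
  -- an antiderivative of W
  have hQder : ∀ σ : ℝ, HasDerivAt (fun τ => ∫ s in (0:ℝ)..τ, 4 * qq u 0 s) (4 * qq u 0 σ) σ :=
    fun σ => ((continuous_const.mul hq0cont : Continuous fun σ => (4:ℝ) * qq u 0 σ).integral_hasStrictDerivAt 0 σ).hasDerivAt
  have hΦ : ∀ σ : ℝ, HasDerivAt (fun τ => 2 * H τ - ∫ s in (0:ℝ)..τ, 4 * qq u 0 s) (W σ) σ := by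
    intro σ
    rw [hW]
    exact ((hH σ).const_mul 2).sub (hQder σ)
  -- Darboux
  have hdarb := hasDerivWithinAt_forall_lt_or_forall_gt_of_forall_ne (convex_ball t₀ η)
    (fun s _ => (hΦ s).hasDerivWithinAt) hne
  have hsign : (0 < v ∧ ∀ s ∈ Metric.ball t₀ η, v / 2 < W s) ∨
      (v < 0 ∧ ∀ s ∈ Metric.ball t₀ η, W s < v / 2) := by
    rcases hdarb with hlt | hgt
    · right
      have h0 := hlt t₀ (Metric.mem_ball_self hη)
      rw [← hvdef] at h0
      exact ⟨by linarith, hlt⟩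
    · left
      have h0 := hgt t₀ (Metric.mem_ball_self hη)
      rw [← hvdef] at h0
      exact ⟨by linarith, hgt⟩
  have hWne0 : ∀ s ∈ Metric.ball t₀ η, W s ≠ 0 := by
    intro s hs h0
    rcases hsign with ⟨hv0, hb⟩ | ⟨hv0, hb⟩
    · have := hb s hs; rw [h0] at this; linarith
    · have := hb s hs; rw [h0] at this; linarith
  have hD20 : ∀ s ∈ Metric.ball t₀ η, D2 s = 0 := by
    intro s hs
    rcases hdich s with h | h
    · exfalso
      apply hWne0 s hs
      simp only [hW, h]; ring
    · exact h
  have hqq0 : ∀ s ∈ Metric.ball t₀ η, qq u 0 s = -(W s) / 4 := by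
    intro s hs
    have h := hD20 s hs
    simp only [hW, h]
    ring
  -- the subinterval [s₁, s₂]
  obtain ⟨s₁, hs₁def⟩ : ∃ s₁ : ℝ, s₁ = t₀ - η / 2 := ⟨_, rfl⟩
  obtain ⟨s₂, hs₂def⟩ : ∃ s₂ : ℝ, s₂ = t₀ + η / 2 := ⟨_, rfl⟩
  have hs₁₂ : s₁ < s₂ := by rw [hs₁def, hs₂def]; linarith
  have hIccball : Set.Icc s₁ s₂ ⊆ Metric.ball t₀ η := by
    intro σ hσ
    rw [Metric.mem_ball, Real.dist_eq, abs_lt]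
    obtain ⟨h1, h2⟩ := hσ
    rw [hs₁def] at h1; rw [hs₂def] at h2
    constructor <;> linarith
  -- Baire category
  set E : ℕ → Set ℝ := fun m =>
    Set.Icc s₁ s₂ ∩ ⋂ (n : ℕ), ⋂ (_ : m ≤ n), {σ : ℝ | |qq u (n : ℝ) σ| ≤ 1} with hE
  have hEclosed : ∀ m, IsClosed (E m) := fun m =>
    isClosed_Icc.inter (isClosed_iInter fun n => isClosed_iInter fun _ =>
      isClosed_le (hqncont (n : ℝ)).abs continuous_const)
  set G : ℕ → Set ℝ := fun m => E m ∪ (Set.Iic s₁ ∪ Set.Ici s₂) with hG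
  have hGclosed : ∀ m, IsClosed (G m) := fun m =>
    (hEclosed m).union (isClosed_Iic.union isClosed_Ici)
  have hGcover : ⋃ m, G m = Set.univ := by
    ext σ
    simp only [Set.mem_iUnion, Set.mem_univ, iff_true]
    rcases le_or_gt σ s₁ with h | h
    · exact ⟨0, Or.inr (Or.inl h)⟩
    rcases le_or_gt s₂ σ with h2 | h2
    · exact ⟨0, Or.inr (Or.inr h2)⟩
    · have htd : Tendsto (fun n : ℕ => qq u (n : ℝ) σ) atTop (nhds 0) :=
        (hqtend σ).comp tendsto_natCast_atTop_atTop
      rw [Metric.tendsto_atTop] at htd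
      obtain ⟨N, hN⟩ := htd 1 one_pos
      refine ⟨N, Or.inl ⟨⟨h.le, h2.le⟩, ?_⟩⟩
      refine Set.mem_iInter.2 fun n => Set.mem_iInter.2 fun hn => ?_
      have := hN n hn
      rw [Real.dist_eq, sub_zero] at this
      exact this.le
  have hdense := dense_iUnion_interior_of_closed hGclosed hGcover
  obtain ⟨σ₀, hσ₀mem, hσ₀Ioo⟩ := hdense.exists_mem_open isOpen_Ioo (Set.nonempty_Ioo.2 hs₁₂)
  obtain ⟨m₀, hm₀⟩ := Set.mem_iUnion.1 hσ₀mem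
  obtain ⟨r, hr, hrball⟩ := Metric.isOpen_iff.1 isOpen_interior σ₀ hm₀
  obtain ⟨r', hr'⟩ : ∃ r' : ℝ, r' = min (r / 2) (min (σ₀ - s₁) (s₂ - σ₀)) := ⟨_, rfl⟩
  have hr'pos : 0 < r' := by
    rw [hr']
    exact lt_min (by linarith) (lt_min (by linarith [hσ₀Ioo.1]) (by linarith [hσ₀Ioo.2]))
  have hr'le1 : r' ≤ r / 2 := hr' ▸ min_le_left _ _
  have hr'le2 : r' ≤ σ₀ - s₁ := hr' ▸ le_trans (min_le_right _ _) (min_le_left _ _)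
  have hr'le3 : r' ≤ s₂ - σ₀ := hr' ▸ le_trans (min_le_right _ _) (min_le_right _ _)
  obtain ⟨a', ha'def⟩ : ∃ a' : ℝ, a' = σ₀ - r' / 2 := ⟨_, rfl⟩
  obtain ⟨b', hb'def⟩ : ∃ b' : ℝ, b' = σ₀ + r' / 2 := ⟨_, rfl⟩
  have hab : a' < b' := by rw [ha'def, hb'def]; linarith
  have hsubIcc : Set.Icc a' b' ⊆ Set.Icc s₁ s₂ := by
    intro σ hσ
    obtain ⟨h1, h2⟩ := hσ
    rw [ha'def] at h1; rw [hb'def] at h2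
    constructor <;> [linarith; linarith]
  have hsubball : Set.Icc a' b' ⊆ Metric.ball σ₀ r := by
    intro σ hσ
    obtain ⟨h1, h2⟩ := hσ
    rw [ha'def] at h1; rw [hb'def] at h2
    rw [Metric.mem_ball, Real.dist_eq, abs_lt]
    constructor <;> linarith
  have hEbound : ∀ σ ∈ Set.Icc a' b', ∀ n : ℕ, m₀ ≤ n → |qq u (n : ℝ) σ| ≤ 1 := by
    intro σ hσ n hn
    have h1 : σ ∈ G m₀ := interior_subset (hrball (hsubball hσ))
    have h3 : s₁ < σ := by
      have := hσ.1; rw [ha'def] at this; linarith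
    have h4 : σ < s₂ := by
      have := hσ.2; rw [hb'def] at this; linarith
    rcases h1 with hE' | hIc
    · exact Set.mem_iInter.1 (Set.mem_iInter.1 hE'.2 n) hn
    · rcases hIc with h | h
      · exact absurd (Set.mem_Iic.1 h) (not_le.2 h3)
      · exact absurd (Set.mem_Ici.1 h) (not_le.2 h4)
  -- H is constant on [a', b']
  have hH0 : ∀ σ ∈ Set.uIcc a' b', HasDerivAt H (0 : ℝ) σ := by
    intro σ hσ
    rw [Set.uIcc_of_le hab.le] at hσ
    have hmem : σ ∈ Metric.ball t₀ η := hIccball (hsubIcc hσ)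
    have h := hH σ
    rw [hD20 σ hmem] at h
    exact h
  have hHconst : H b' - H a' = 0 := by
    have h1 := intervalIntegral.integral_eq_sub_of_hasDerivAt hH0
      (intervalIntegrable_const (c := (0 : ℝ)))
    simpa using h1.symm
  -- FTC identity for each n
  have hIn : ∀ n : ℕ, (∫ σ in a'..b', (2 * qq u 0 σ - 2 * qq u (n : ℝ) σ))
      = (∫ x in Set.Ioc (0 : ℝ) (n : ℝ), ‖u (x, b')‖ ^ 2)
        - (∫ x in Set.Ioc (0 : ℝ) (n : ℝ), ‖u (x, a')‖ ^ 2) := by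
    intro n
    exact intervalIntegral.integral_eq_sub_of_hasDerivAt
      (fun σ _ => hKder (n : ℝ) (Nat.cast_nonneg n) σ)
      (((continuous_const.mul hq0cont).sub (continuous_const.mul (hqncont (n : ℝ))) : Continuous fun σ => 2 * qq u 0 σ - 2 * qq u (n:ℝ) σ).intervalIntegrable a' b')
  -- limit of the RHS
  have hlim1 : Tendsto (fun n : ℕ => (∫ x in Set.Ioc (0 : ℝ) (n : ℝ), ‖u (x, b')‖ ^ 2)
      - (∫ x in Set.Ioc (0 : ℝ) (n : ℝ), ‖u (x, a')‖ ^ 2)) atTop (nhds 0) := by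
    have := (hKtend b').sub (hKtend a')
    rwa [hHconst] at this
  -- dominated convergence for the flux terms
  have hlim2 : Tendsto (fun n : ℕ => ∫ σ in Set.Ioc a' b', qq u (n : ℝ) σ) atTop (nhds 0) := by
    have h := MeasureTheory.tendsto_integral_filter_of_dominated_convergence
      (μ := volume.restrict (Set.Ioc a' b')) (F := fun (n : ℕ) σ => qq u (n : ℝ) σ)
      (f := fun _ => (0 : ℝ)) (bound := fun _ => (1 : ℝ))
      (Eventually.of_forall fun n => ((hqncont (n : ℝ)).aestronglyMeasurable))
      (by
        refine eventually_atTop.2 ⟨m₀, fun n hn => ?_⟩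
        refine (ae_restrict_iff' measurableSet_Ioc).2 (Eventually.of_forall fun σ hσ => ?_)
        rw [Real.norm_eq_abs]
        exact hEbound σ ⟨hσ.1.le, hσ.2⟩ n hn)
      ((MeasureTheory.integrableOn_const_iff (C := (1 : ℝ)) (by simp)).2 (Or.inr measure_Ioc_lt_top))
      (Eventually.of_forall fun σ => (hqtend σ).comp tendsto_natCast_atTop_atTop)
    simpa using h
  have hlim2' : Tendsto (fun n : ℕ => ∫ σ in a'..b', 2 * qq u (n : ℝ) σ) atTop (nhds 0) := by
    have h := hlim2.const_mul (2 : ℝ)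
    rw [mul_zero] at h
    apply h.congr
    intro n
    rw [intervalIntegral.integral_of_le hab.le, MeasureTheory.integral_const_mul]
  -- conclude the main integral vanishes
  have hsplit : ∀ n : ℕ, (∫ σ in a'..b', (2 * qq u 0 σ - 2 * qq u (n : ℝ) σ))
      = (∫ σ in a'..b', 2 * qq u 0 σ) - ∫ σ in a'..b', 2 * qq u (n : ℝ) σ := fun n =>
    intervalIntegral.integral_sub ((continuous_const.mul hq0cont : Continuous fun σ => (2:ℝ) * qq u 0 σ).intervalIntegrable a' b')
      ((continuous_const.mul (hqncont (n : ℝ)) : Continuous fun σ => (2:ℝ) * qq u (n:ℝ) σ).intervalIntegrable a' b')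
  have hA : (∫ σ in a'..b', 2 * qq u 0 σ) = 0 := by
    have h1 : Tendsto (fun n : ℕ => (∫ σ in a'..b', 2 * qq u 0 σ)
        - ∫ σ in a'..b', 2 * qq u (n : ℝ) σ) atTop
        (nhds ((∫ σ in a'..b', 2 * qq u 0 σ) - 0)) := tendsto_const_nhds.sub hlim2'
    have h2 : Tendsto (fun n : ℕ => (∫ σ in a'..b', 2 * qq u 0 σ)
        - ∫ σ in a'..b', 2 * qq u (n : ℝ) σ) atTop (nhds 0) := by
      apply hlim1.congr
      intro n
      rw [← hIn n, hsplit n]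
    have := tendsto_nhds_unique h1 h2
    linarith
  -- sign contradiction
  rcases hsign with ⟨hv0, hb⟩ | ⟨hv0, hb⟩
  · -- v > 0 : integrand ≤ -v/4 < 0
    have hile : (∫ σ in a'..b', 2 * qq u 0 σ) ≤ ∫ σ in a'..b', (-(v / 4)) := by
      apply intervalIntegral.integral_mono_on hab.le
        ((continuous_const.mul hq0cont : Continuous fun σ => (2:ℝ) * qq u 0 σ).intervalIntegrable a' b') (intervalIntegrable_const)
      intro σ hσ
      have hmem := hIccball (hsubIcc hσ)
      have h2 := hqq0 σ hmem
      have h3 := hb σ hmem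
      simp only [Pi.mul_apply, h2]; linarith
    rw [hA, intervalIntegral.integral_const, smul_eq_mul] at hile
    nlinarith [mul_pos (sub_pos.2 hab) hv0]
  · -- v < 0 : integrand ≥ -v/4 > 0
    have hile : (∫ σ in a'..b', (-(v / 4))) ≤ ∫ σ in a'..b', 2 * qq u 0 σ := by
      apply intervalIntegral.integral_mono_on hab.le (intervalIntegrable_const)
        ((continuous_const.mul hq0cont : Continuous fun σ => (2:ℝ) * qq u 0 σ).intervalIntegrable a' b')
      intro σ hσ
      have hmem := hIccball (hsubIcc hσ)
      have h2 := hqq0 σ hmem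
      have h3 := hb σ hmem
      simp only [Pi.mul_apply, h2]; linarith
    rw [hA, intervalIntegral.integral_const, smul_eq_mul] at hile
    nlinarith [mul_pos (sub_pos.2 hab) (neg_pos.2 hv0)]

lemma tendsto_qq (u : ℝ × ℝ → ℂ)
    (hdecay : ∀ t : ℝ, Tendsto (fun x => u (x, t)) atTop (nhds 0)
      ∧ Tendsto (fun x => ux u x t) atTop (nhds 0)) (t : ℝ) :
    Tendsto (fun x => qq u x t) atTop (nhds 0) := by
  have h1 : Tendsto (fun x => (starRingEnd ℂ) (u (x, t))) atTop (nhds 0) := by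
    have := ((Complex.continuous_conj.tendsto 0).comp (hdecay t).1)
    simpa [Function.comp_def] using this
  have h2 := h1.mul (hdecay t).2
  rw [zero_mul] at h2
  have h3 : Tendsto (fun x => ((starRingEnd ℂ) (u (x, t)) * ux u x t).im) atTop
      (nhds ((0 : ℂ).im)) := (Complex.continuous_im.tendsto 0).comp h2
  rw [Complex.zero_im] at h3
  exact h3

lemma tendsto_K_atTop (u : ℝ × ℝ → ℂ) (σ : ℝ)
    (hint : IntegrableOn (fun x => ‖u (x, σ)‖ ^ 2) (Set.Ioi (0 : ℝ))) :
    Tendsto (fun n : ℕ => ∫ x in Set.Ioc (0 : ℝ) (n : ℝ), ‖u (x, σ)‖ ^ 2) atTop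
      (nhds (∫ x in Set.Ioi (0 : ℝ), ‖u (x, σ)‖ ^ 2)) := by
  have hU : (⋃ n : ℕ, Set.Ioc (0 : ℝ) (n : ℝ)) = Set.Ioi 0 := by
    ext x
    simp only [Set.mem_iUnion, Set.mem_Ioc, Set.mem_Ioi]
    constructor
    · rintro ⟨n, h1, _⟩; exact h1
    · intro hx
      obtain ⟨n, hn⟩ := exists_nat_ge x
      exact ⟨n, hx, hn⟩
  have h := MeasureTheory.tendsto_setIntegral_of_monotone
    (s := fun n : ℕ => Set.Ioc (0 : ℝ) (n : ℝ)) (fun n => measurableSet_Ioc)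
    (fun a b hab => Set.Ioc_subset_Ioc_right (Nat.cast_le.2 hab))
    (by rw [hU]; exact hint)
  rwa [hU] at h


/-- For a smooth solution of NLS on the half-line `x ≥ 0` with decaying, square-integrable
data, valid differentiation under the integral, and the new integrable boundary condition
`uₜ − 2i|u|²u + iΩuₓ = 0` at `x = 0` with `Ω(t) = √(β² − 4|u(0,t)|²)`, the quantity
`I₁(t) = 2∫₀^∞ |u(x,t)|² dx + Ω(t)` is constant in `t`. -/
theorem first_conserved_quantity (β : ℝ) (u : ℝ × ℝ → ℂ) (hu : ContDiff ℝ (⊤ : ℕ∞) u)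
    (hNLS : ∀ x t : ℝ, 0 ≤ x →
      I * ut u x t + uxx u x t + 2 * (‖u (x, t)‖ : ℂ) ^ 2 * u (x, t) = 0)
    (hdecay : ∀ t : ℝ, Tendsto (fun x => u (x, t)) atTop (nhds 0)
      ∧ Tendsto (fun x => ux u x t) atTop (nhds 0))
    (hint : ∀ t : ℝ, IntegrableOn (fun x => ‖u (x, t)‖ ^ 2) (Set.Ioi (0 : ℝ)))
    (hdiff : ∀ t : ℝ,
      HasDerivAt (fun s => ∫ x in Set.Ioi (0 : ℝ), ‖u (x, s)‖ ^ 2)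
        (∫ x in Set.Ioi (0 : ℝ), deriv (fun s => ‖u (x, s)‖ ^ 2) t) t)
    (hβ : ∀ t : ℝ, 4 * ‖u (0, t)‖ ^ 2 < β ^ 2)
    (hbc : ∀ t : ℝ,
      ut u 0 t - 2 * I * (‖u (0, t)‖ : ℂ) ^ 2 * u (0, t)
        + I * ((Real.sqrt (β ^ 2 - 4 * ‖u (0, t)‖ ^ 2) : ℝ) : ℂ) * ux u 0 t = 0) :
    ∀ t₁ t₂ : ℝ,
      2 * (∫ x in Set.Ioi (0 : ℝ), ‖u (x, t₁)‖ ^ 2)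
          + Real.sqrt (β ^ 2 - 4 * ‖u (0, t₁)‖ ^ 2)
        = 2 * (∫ x in Set.Ioi (0 : ℝ), ‖u (x, t₂)‖ ^ 2)
          + Real.sqrt (β ^ 2 - 4 * ‖u (0, t₂)‖ ^ 2) := by
  have hdich : ∀ σ : ℝ,
      (∫ x in Set.Ioi (0 : ℝ), deriv (fun s => ‖u (x, s)‖ ^ 2) σ) = 2 * qq u 0 σ ∨
      (∫ x in Set.Ioi (0 : ℝ), deriv (fun s => ‖u (x, s)‖ ^ 2) σ) = 0 := by
    intro σ
    by_cases hI : IntegrableOn (fun x => deriv (fun s => ‖u (x, s)‖ ^ 2) σ) (Set.Ioi (0 : ℝ))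
    · left; exact integral_deriv_eq u hu hNLS hdecay σ hI
    · right; exact MeasureTheory.integral_undef hI
  have hgood : ∀ σ : ℝ,
      2 * (∫ x in Set.Ioi (0 : ℝ), deriv (fun s => ‖u (x, s)‖ ^ 2) σ) - 4 * qq u 0 σ = 0 := by
    by_contra hbad
    push_neg at hbad
    obtain ⟨t₀, ht₀⟩ := hbad
    exact no_bad_point u hu
      (fun σ => ∫ x in Set.Ioi (0 : ℝ), ‖u (x, σ)‖ ^ 2)
      (fun σ => ∫ x in Set.Ioi (0 : ℝ), deriv (fun s => ‖u (x, s)‖ ^ 2) σ)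
      hdiff hdich (fun σ => tendsto_qq u hdecay σ)
      (fun n hn σ₀ => hasDerivAt_K u hu hNLS n hn σ₀)
      (fun σ => tendsto_K_atTop u σ (hint σ))
      t₀ ht₀
  have key : ∀ t : ℝ, HasDerivAt (fun s => 2 * (∫ x in Set.Ioi (0 : ℝ), ‖u (x, s)‖ ^ 2)
      + Real.sqrt (β ^ 2 - 4 * ‖u (0, s)‖ ^ 2)) 0 t := by
    intro t
    have h1 := (hdiff t).const_mul (2 : ℝ)
    have h2 := omega_hasDerivAt β u hu hβ hbc t
    have h3 := h1.add h2
    have h4 : 2 * (∫ x in Set.Ioi (0 : ℝ), deriv (fun s => ‖u (x, s)‖ ^ 2) t)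
        + -4 * qq u 0 t = 0 := by
      have := hgood t
      linarith
    rw [h4] at h3
    exact h3
  intro t₁ t₂
  exact is_const_of_deriv_eq_zero
    (fun t => ((key t).differentiableAt))
    (fun t => (key t).deriv) t₁ t₂
end
end
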